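/- Let p be a nonnegative integer, b > 0, and c ∈ ℝ. Then ∫_{−∞}^0 Φ(ub + c)|u|^p du + ∫_0^∞ Φ(−ub − c) u^p du = (1/((p+1) b^{p+1})) ∫_{−∞}^∞ φ(v) |v − c|^{p+1} dv, where φ and Φ are the standard normal density and distribution function. -/

import Mathlib

/-!
After the substitution `u = -s` in the first integral, for `s ≥ 0` both `Φ(c - sb)` and
`Φ(-sb - c) = 1 - Φ(sb + c)` are Gaussian masses of the sets `{t | s ≤ ∓(t - c)/b}`. Swapping the
`s`- and `t`-integrals (Fubini), the inner integral becomes `∫_0^{x⁺} s^p ds = (x⁺)^{p+1}/(p+1)`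
with `x = ∓(t - c)/b`, and the positive and negative parts of `(t - c)/b` together give
`|t - c|^{p+1}/b^{p+1}`.
-/

open MeasureTheory Real
open scoped Topology

noncomputable section

/-- Standard normal density `φ(t) = (2π)^{-1/2} e^{-t²/2}`. -/
def stdGauss (t : ℝ) : ℝ := (Real.sqrt (2 * π))⁻¹ * Real.exp (-t ^ 2 / 2)

/-- Standard normal distribution function `Φ(y) = ∫_{-∞}^y φ(t) dt`. -/
def stdGaussCdf (y : ℝ) : ℝ := ∫ t in Set.Iic y, stdGauss t

open ProbabilityTheory Set
open scoped NNReal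

lemma setIntegral_Icc_zero_pow (p : ℕ) (r : ℝ) :
    ∫ s in Icc 0 r, s ^ p = max r 0 ^ (p + 1) / (p + 1) := by
  rcases le_total 0 r with hr | hr
  · rw [integral_Icc_eq_integral_Ioc, ← intervalIntegral.integral_of_le hr, integral_pow,
      max_eq_left hr]
    simp
  · rcases hr.eq_or_lt with rfl | hr
    · simp
    · simp [Icc_eq_empty_of_lt hr, max_eq_right hr.le]

lemma setIntegral_Ici_indicator_Iic_pow_mul (p : ℕ) (r a : ℝ) :
    ∫ s in Ici 0, (Iic r).indicator (fun s => s ^ p * a) s = max r 0 ^ (p + 1) / (p + 1) * a := by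
  rw [setIntegral_indicator measurableSet_Iic, Ici_inter_Iic, integral_mul_const,
    setIntegral_Icc_zero_pow]

lemma integrableOn_Ici_indicator_Iic_pow_mul (p : ℕ) (r a : ℝ) :
    IntegrableOn ((Iic r).indicator (fun s => s ^ p * a)) (Ici 0) := by
  rw [IntegrableOn, integrable_indicator_iff measurableSet_Iic, IntegrableOn,
    Measure.restrict_restrict measurableSet_Iic, Iic_inter_Ici]
  exact (by fun_prop : Continuous fun s : ℝ => s ^ p * a).integrableOn_Icc

lemma setIntegral_Ici_pow_mul_setIntegral_le {α : Type*} [MeasurableSpace α] {μ : Measure α}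
    [SigmaFinite μ] {g w : α → ℝ} (hg : Measurable g) (hw : Measurable w) (p : ℕ)
    (hint : Integrable (fun t => g t * max (w t) 0 ^ (p + 1)) μ) :
    ∫ s in Ici 0, s ^ p * ∫ t in {t | s ≤ w t}, g t ∂μ =
      (∫ t, g t * max (w t) 0 ^ (p + 1) ∂μ) / (p + 1) := by
  set F : ℝ × α → ℝ := {q | q.1 ≤ w q.2}.indicator fun q => q.1 ^ p * g q.2
  have hF : Measurable F :=
    (by fun_prop : Measurable fun q : ℝ × α => q.1 ^ p * g q.2).indicator
      (measurableSet_le measurable_fst (hw.comp measurable_snd))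
  have hF_apply : ∀ s t, F (s, t) = (Iic (w t)).indicator (fun s => s ^ p * g t) s :=
    fun _ _ => rfl
  have h_t : ∀ s, ∫ t, F (s, t) ∂μ = s ^ p * ∫ t in {t | s ≤ w t}, g t ∂μ := fun s => by
    rw [← integral_const_mul, ← integral_indicator (measurableSet_le measurable_const hw)]
    rfl
  have h_s : ∀ t, ∫ s in Ici 0, F (s, t) = max (w t) 0 ^ (p + 1) / (p + 1) * g t := fun t =>
    setIntegral_Ici_indicator_Iic_pow_mul p (w t) (g t)
  have h_s_norm : ∀ t, ∫ s in Ici 0, ‖F (s, t)‖ = max (w t) 0 ^ (p + 1) / (p + 1) * ‖g t‖ := by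
    intro t
    rw [← setIntegral_Ici_indicator_Iic_pow_mul]
    refine setIntegral_congr_fun measurableSet_Ici fun s (hs : 0 ≤ s) => ?_
    simp only [hF_apply, indicator_apply, mem_Iic]
    split_ifs <;> simp [abs_of_nonneg hs]
  have hF_int : Integrable F ((volume.restrict (Ici 0)).prod μ) := by
    refine (integrable_prod_iff' hF.aestronglyMeasurable).2
      ⟨.of_forall fun t => integrableOn_Ici_indicator_Iic_pow_mul p (w t) (g t), ?_⟩
    simp_rw [h_s_norm]
    refine (hint.norm.div_const (p + 1)).congr (.of_forall fun t => ?_)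
    simp only [norm_mul, norm_pow, Real.norm_of_nonneg (le_max_right (w t) 0)]
    ring
  calc ∫ s in Ici 0, s ^ p * ∫ t in {t | s ≤ w t}, g t ∂μ
      = ∫ s in Ici 0, ∫ t, F (s, t) ∂μ := by simp_rw [h_t]
    _ = ∫ t, (∫ s in Ici 0, F (s, t)) ∂μ :=
      integral_integral_swap (f := fun s t => F (s, t)) hF_int
    _ = (∫ t, g t * max (w t) 0 ^ (p + 1) ∂μ) / (p + 1) := by
      simp_rw [h_s]
      rw [← integral_div]
      congr 1 with t
      ring

lemma max_zero_pow_add_max_neg_zero_pow (x : ℝ) {n : ℕ} (hn : n ≠ 0) :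
    max x 0 ^ n + max (-x) 0 ^ n = |x| ^ n := by
  rcases le_total 0 x with hx | hx
  · simp [hx, abs_of_nonneg hx, zero_pow hn]
  · simp [hx, abs_of_nonpos hx, zero_pow hn]

lemma MeasureTheory.Integrable.mul_max_zero_pow {α : Type*} [MeasurableSpace α] {μ : Measure α}
    {g w : α → ℝ} (hg : AEStronglyMeasurable g μ) (hw : AEStronglyMeasurable w μ) {n : ℕ}
    (h : Integrable (fun t => g t * |w t| ^ n) μ) :
    Integrable (fun t => g t * max (w t) 0 ^ n) μ := by
  refine h.mono (hg.mul ((hw.sup aestronglyMeasurable_const).pow n)) (.of_forall fun t => ?_)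
  simp only [norm_mul, norm_pow, Real.norm_eq_abs, abs_abs, abs_of_nonneg (le_max_right (w t) 0)]
  exact mul_le_mul_of_nonneg_left
    (pow_le_pow_left₀ (le_max_right _ _) (max_le (le_abs_self _) (abs_nonneg _)) n) (abs_nonneg _)

lemma stdGauss_eq_gaussianPDFReal : stdGauss = gaussianPDFReal 0 1 := by
  ext t
  simp [stdGauss, gaussianPDFReal]

lemma measurable_stdGauss : Measurable stdGauss := by
  unfold stdGauss
  fun_prop

lemma stdGauss_neg (t : ℝ) : stdGauss (-t) = stdGauss t := by
  simp [stdGauss]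

lemma stdGaussCdf_neg (y : ℝ) : stdGaussCdf (-y) = ∫ t in Ici y, stdGauss t := by
  have h := integral_comp_neg_Iic (-y) stdGauss
  simp only [stdGauss_neg, neg_neg] at h
  rw [stdGaussCdf, h, integral_Ici_eq_integral_Ioi]

lemma integrable_stdGauss_mul_abs_sub_pow (c : ℝ) (n : ℕ) :
    Integrable fun t => stdGauss t * |t - c| ^ n := by
  have hmom : Integrable (fun t => |t - c| ^ n) (gaussianReal 0 1) := by
    simpa [Real.norm_eq_abs] using
      ((memLp_id_gaussianReal (n : ℝ≥0)).sub (memLp_const c)).integrable_norm_pow'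
  rw [gaussianReal_of_var_ne_zero _ one_ne_zero, integrable_withDensity_iff_integrable_smul'
    (measurable_gaussianPDF 0 1) (.of_forall fun _ => gaussianPDF_lt_top)] at hmom
  simpa [stdGauss_eq_gaussianPDFReal] using hmom

lemma integrable_stdGauss_mul_max_div_pow (c b : ℝ) (n : ℕ) :
    Integrable fun t => stdGauss t * max ((t - c) / b) 0 ^ n := by
  refine Integrable.mul_max_zero_pow measurable_stdGauss.aestronglyMeasurable (by fun_prop) ?_
  simpa only [abs_div, div_pow, mul_div_assoc] using
    (integrable_stdGauss_mul_abs_sub_pow c n).div_const (|b| ^ n)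

section

variable {b : ℝ} (hb : 0 < b) (c : ℝ) (p : ℕ)
include hb

lemma integral_Iic_stdGaussCdf_mul_abs_pow :
    ∫ u in Iic 0, stdGaussCdf (u * b + c) * |u| ^ p =
      (∫ t, stdGauss t * max ((t - c) / -b) 0 ^ (p + 1)) / (p + 1) := by
  rw [← setIntegral_Ici_pow_mul_setIntegral_le measurable_stdGauss (by fun_prop) p
    (integrable_stdGauss_mul_max_div_pow c (-b) (p + 1)),
    integral_Ici_eq_integral_Ioi, ← neg_zero, ← integral_comp_neg_Iic, neg_zero]
  refine setIntegral_congr_fun measurableSet_Iic fun u (hu : u ≤ 0) => ?_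
  have hset : {t | -u ≤ (t - c) / -b} = Iic (u * b + c) := by
    ext t
    simp only [mem_ofPred_eq, div_neg, neg_le_neg_iff, div_le_iff₀ hb, mem_Iic]
    constructor <;> intro h <;> linarith
  rw [hset, abs_of_nonpos hu, mul_comm, stdGaussCdf]

lemma integral_Ici_stdGaussCdf_neg_mul_pow :
    ∫ u in Ici 0, stdGaussCdf (-(u * b) - c) * u ^ p =
      (∫ t, stdGauss t * max ((t - c) / b) 0 ^ (p + 1)) / (p + 1) := by
  rw [← setIntegral_Ici_pow_mul_setIntegral_le measurable_stdGauss (by fun_prop) p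
    (integrable_stdGauss_mul_max_div_pow c b (p + 1))]
  refine setIntegral_congr_fun measurableSet_Ici fun u _ => ?_
  have hset : {t | u ≤ (t - c) / b} = Ici (u * b + c) := by
    ext t
    simp only [mem_ofPred_eq, le_div_iff₀ hb, mem_Ici]
    constructor <;> intro h <;> linarith
  rw [hset, ← stdGaussCdf_neg, mul_comm, neg_add']

end

/-- for a nonnegative integer `p`, `b > 0` and `c ∈ ℝ`,
`∫_{-∞}^0 Φ(ub+c)|u|^p du + ∫_0^∞ Φ(-ub-c)u^p du
  = (1/((p+1) b^{p+1})) ∫_ℝ φ(v)|v-c|^{p+1} dv`. -/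
theorem statement16 (p : ℕ) (b : ℝ) (hb : 0 < b) (c : ℝ) :
    (∫ u in Set.Iic (0 : ℝ), stdGaussCdf (u * b + c) * |u| ^ p) +
      (∫ u in Set.Ici (0 : ℝ), stdGaussCdf (-(u * b) - c) * u ^ p) =
    (1 / (((p : ℝ) + 1) * b ^ (p + 1))) * ∫ v : ℝ, stdGauss v * |v - c| ^ (p + 1) := by
  have hsum : ∀ t, stdGauss t * max ((t - c) / -b) 0 ^ (p + 1) +
      stdGauss t * max ((t - c) / b) 0 ^ (p + 1) =
        stdGauss t * |t - c| ^ (p + 1) / b ^ (p + 1) := fun t => by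
    rw [← mul_add, div_neg, add_comm, max_zero_pow_add_max_neg_zero_pow _ p.succ_ne_zero,
      abs_div, abs_of_pos hb, div_pow, mul_div_assoc]
  rw [integral_Iic_stdGaussCdf_mul_abs_pow hb, integral_Ici_stdGaussCdf_neg_mul_pow hb, ← add_div,
    ← integral_add (integrable_stdGauss_mul_max_div_pow c (-b) (p + 1))
      (integrable_stdGauss_mul_max_div_pow c b (p + 1))]
  simp_rw [hsum, integral_div]
  field_simp
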